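/- arXiv:2005.11244 — 4 statements merged into one kernel-verified Lean document; each statement's English description precedes it below -/
import Mathlib

section
/- The function S = max_{N'≤n≤N} (N/n)·Ŝ_n is upper semicontinuous on I^{N!}, and with â = a/(N-1)! one has S(x_1,…,x_{N!}) ≤ ∑_{k=1}^{N!} â(x_k) for all (x_1,…,x_{N!}) ∈ I^{N!}, where â is lower semicontinuous and μ-integrable. -/
open MeasureTheory

/-- The multiset of coordinates of a point of `I^m`. -/
def coordMultiset {I : Type*} {m : ℕ} (x : Fin m → I) : Multiset I :=
  Multiset.map x Finset.univ.val

/-- `x ∈ I^{N!}` is an `N!/n`-fold replication of `y ∈ I^n` if the multiset of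
coordinates of `x` equals `N!/n` copies of the multiset of coordinates of `y`. -/
def IsReplication {I : Type*} (N n : ℕ) (x : Fin (Nat.factorial N) → I)
    (y : Fin n → I) : Prop :=
  coordMultiset x = (Nat.factorial N / n) • coordMultiset y

/-- `Ŝ_n(x) = s_n(y)` if `x` is an `N!/n`-fold replication of some `y ∈ I^n`
(well-defined when `s n` is symmetric), and `0` otherwise. -/
noncomputable def Shat {I : Type*} (s : ∀ n : ℕ, (Fin n → I) → ℝ) (N n : ℕ)
    (x : Fin (Nat.factorial N) → I) : ℝ :=
  letI := Classical.propDecidable (∃ y : Fin n → I, IsReplication N n x y)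
  if h : ∃ y : Fin n → I, IsReplication N n x y then s n h.choose else 0

/-- `S = max_{N' ≤ n ≤ N} (N/n)·Ŝ_n` on `I^{N!}`. -/
noncomputable def bigS {I : Type*} (s : ∀ n : ℕ, (Fin n → I) → ℝ) (N' N : ℕ)
    (hNN : N' ≤ N) (x : Fin (Nat.factorial N) → I) : ℝ :=
  (Finset.Icc N' N).sup' (Finset.nonempty_Icc.mpr hNN)
    (fun n => ((N : ℝ) / (n : ℝ)) * Shat s N n x)

/-!
Fix a map `f : Fin N! → Fin n` all of whose fibres have `N!/n` elements. Then `x` is an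
`N!/n`-fold replication of `y` exactly when `x = y ∘ f ∘ σ` for a permutation `σ` of the
coordinates, so for `c > 0` the superlevel set `{Ŝ_n ≥ c}` is the finite union over `σ` of the
images of the closed set `{s_n ≥ c}` under `y ↦ y ∘ (f ∘ σ)`. Precomposition with a surjection
is a closed embedding of `I^n` into `I^{N!}` because `I` is Hausdorff, so `Ŝ_n` is upper
semicontinuous (for `c ≤ 0` the superlevel set is everything since `s_n ≥ 0`), and so is the
finite maximum `S`. On a replication `∑ a(x_k) = (N!/n) ∑ a(y_k)`, and `N/n = (N!/n)/(N-1)!`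
gives the bound.
-/

open Function Topology

theorem Function.Surjective.isClosedEmbedding_comp {ι κ X : Type*} [TopologicalSpace X]
    [T2Space X] {f : ι → κ} (hf : Surjective f) :
    IsClosedEmbedding ((· ∘ f) : (κ → X) → (ι → X)) := by
  refine ⟨hf.isEmbedding_comp f, ?_⟩
  have hrange : Set.range ((· ∘ f) : (κ → X) → (ι → X)) = {x | (x ∘ surjInv hf) ∘ f = x} := by
    ext x
    constructor
    · rintro ⟨y, rfl⟩
      ext i
      simp [surjInv_eq hf]
    · exact fun hx => ⟨_, hx⟩
  rw [hrange]
  exact isClosed_eq (by fun_prop) continuous_id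

theorem UpperSemicontinuous.finset_sup' {ι α β : Type*} [TopologicalSpace α] [LinearOrder β]
    {s : Finset ι} (hs : s.Nonempty) {f : ι → α → β} (hf : ∀ i ∈ s, UpperSemicontinuous (f i)) :
    UpperSemicontinuous fun x => s.sup' hs (f · x) := by
  simp_rw [← Finset.sup'_apply]
  exact Finset.sup'_induction hs _ (fun _ hg _ hh => hg.sup hh) hf

theorem Multiset.map_snd_product {α β : Type*} (s : Multiset α) (t : Multiset β) :
    (s ×ˢ t).map Prod.snd = card s • t := by
  induction s using Multiset.induction with
  | empty => simp
  | cons a s ih => simp [Multiset.cons_product, ih, succ_nsmul']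

theorem exists_map_univ_eq_div_nsmul {M n : ℕ} (h : n ∣ M) :
    ∃ f : Fin M → Fin n, Multiset.map f Finset.univ.val = (M / n) • Finset.univ.val := by
  have hM : M = M / n * n := (Nat.div_mul_cancel h).symm
  refine ⟨Prod.snd ∘ finProdFinEquiv.symm ∘ finCongr hM, ?_⟩
  rw [← Multiset.map_map, ← Multiset.map_map, Multiset.map_univ_val_equiv,
    Multiset.map_univ_val_equiv, ← Finset.univ_product_univ, Finset.product_val,
    Multiset.map_snd_product, Finset.card_val, Finset.card_univ, Fintype.card_fin]

theorem surjective_of_map_univ_eq_nsmul {M n m : ℕ} (hm : m ≠ 0) {f : Fin M → Fin n}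
    (hf : Multiset.map f Finset.univ.val = m • Finset.univ.val) : Surjective f := by
  intro j
  have hj : j ∈ Multiset.map f Finset.univ.val := by
    rw [hf]
    exact Multiset.mem_nsmul.mpr ⟨hm, Finset.mem_univ_val j⟩
  obtain ⟨i, -, hi⟩ := Multiset.mem_map.mp hj
  exact ⟨i, hi⟩

section coordMultiset

variable {α : Type*} {m : ℕ}

theorem natCard_fiber_eq_count_coordMultiset [DecidableEq α] (x : Fin m → α) (c : α) :
    Nat.card {i // x i = c} = (coordMultiset x).count c := by
  rw [Nat.card_eq_fintype_card, coordMultiset, Multiset.count_map, Fintype.card_subtype,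
    Finset.card_def, Finset.filter_val]
  simp_rw [eq_comm]

theorem coordMultiset_eq_iff_exists_perm {x y : Fin m → α} :
    coordMultiset x = coordMultiset y ↔ ∃ σ : Equiv.Perm (Fin m), y ∘ σ = x := by
  classical
  constructor
  · intro h
    have hfiber (c : α) : Nat.card {i // x i = c} = Nat.card {i // y i = c} := by
      rw [natCard_fiber_eq_count_coordMultiset, natCard_fiber_eq_count_coordMultiset, h]
    exact ⟨.ofFiberEquiv fun c => (Finite.card_eq.mp (hfiber c)).some,
      funext (Equiv.ofFiberEquiv_map _)⟩
  · rintro ⟨σ, rfl⟩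
    rw [coordMultiset, coordMultiset, ← Multiset.map_map, Multiset.map_univ_val_equiv]

theorem coordMultiset_comp_of_map_univ_eq_nsmul {M k : ℕ} {f : Fin M → Fin m}
    (hf : Multiset.map f Finset.univ.val = k • Finset.univ.val) (y : Fin m → α) :
    coordMultiset (y ∘ f) = k • coordMultiset y := by
  rw [coordMultiset, ← Multiset.map_map, hf, Multiset.map_nsmul, coordMultiset]

theorem sum_comp_eq_sum_coordMultiset {β : Type*} [AddCommMonoid β] (a : α → β) (x : Fin m → α) :
    ∑ k, a (x k) = ((coordMultiset x).map a).sum := by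
  rw [coordMultiset, Multiset.map_map]
  rfl

end coordMultiset

section Replication

open Nat

variable {I : Type*} {N n : ℕ} {x : Fin N ! → I} {y y' : Fin n → I}

theorem IsReplication.coordMultiset_eq (hm : N ! / n ≠ 0) (h : IsReplication N n x y)
    (h' : IsReplication N n x y') : coordMultiset y = coordMultiset y' :=
  nsmul_right_injective hm (h.symm.trans h')

theorem isReplication_iff_exists_perm {f : Fin N ! → Fin n}
    (hf : Multiset.map f Finset.univ.val = (N ! / n) • Finset.univ.val) :
    IsReplication N n x y ↔ ∃ σ : Equiv.Perm (Fin N !), y ∘ (f ∘ σ) = x := by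
  rw [IsReplication, ← coordMultiset_comp_of_map_univ_eq_nsmul hf,
    coordMultiset_eq_iff_exists_perm]
  rfl

theorem IsReplication.sum_eq {β : Type*} [AddCommMonoid β] (a : I → β)
    (h : IsReplication N n x y) : ∑ k, a (x k) = (N ! / n) • ∑ k, a (y k) := by
  rw [sum_comp_eq_sum_coordMultiset, h, Multiset.map_nsmul, Multiset.sum_nsmul,
    sum_comp_eq_sum_coordMultiset]

variable {s : ∀ n : ℕ, (Fin n → I) → ℝ}

theorem Shat_eq_of_isReplication (hsymm : ∀ (σ : Equiv.Perm (Fin n)) z, s n (z ∘ σ) = s n z)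
    (hm : N ! / n ≠ 0) (h : IsReplication N n x y) : Shat s N n x = s n y := by
  have hex : ∃ y, IsReplication N n x y := ⟨y, h⟩
  obtain ⟨σ, hσ⟩ := coordMultiset_eq_iff_exists_perm.mp (hex.choose_spec.coordMultiset_eq hm h)
  rw [Shat, dif_pos hex, ← hσ, hsymm]

theorem Shat_eq_zero_of_forall_not_isReplication (h : ∀ y, ¬IsReplication N n x y) :
    Shat s N n x = 0 := by
  rw [Shat, dif_neg (not_exists.mpr h)]

theorem Shat_nonneg (hs : ∀ z, 0 ≤ s n z) (x : Fin N ! → I) : 0 ≤ Shat s N n x := by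
  rw [Shat]
  split_ifs
  exacts [hs _, le_rfl]

theorem le_Shat_iff {c : ℝ} (hc : 0 < c) (hsymm : ∀ (σ : Equiv.Perm (Fin n)) z, s n (z ∘ σ) = s n z)
    (hm : N ! / n ≠ 0) : c ≤ Shat s N n x ↔ ∃ y, IsReplication N n x y ∧ c ≤ s n y := by
  constructor
  · intro hcx
    obtain ⟨y, hy⟩ : ∃ y, IsReplication N n x y := by
      by_contra! hx
      rw [Shat_eq_zero_of_forall_not_isReplication hx] at hcx
      exact hcx.not_gt hc
    exact ⟨y, hy, Shat_eq_of_isReplication hsymm hm hy ▸ hcx⟩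
  · rintro ⟨y, hy, hcy⟩
    rwa [Shat_eq_of_isReplication hsymm hm hy]

theorem factorial_div_ne_zero (hn : 0 < n) (hnN : n ≤ N) : N ! / n ≠ 0 :=
  (Nat.div_pos (hnN.trans N.self_le_factorial) hn).ne'

theorem upperSemicontinuous_Shat [TopologicalSpace I] [T2Space I] (hn : 0 < n) (hnN : n ≤ N)
    (hs_nonneg : ∀ z, 0 ≤ s n z) (hs_usc : UpperSemicontinuous (s n))
    (hsymm : ∀ (σ : Equiv.Perm (Fin n)) z, s n (z ∘ σ) = s n z) :
    UpperSemicontinuous (Shat s N n) := by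
  have hm := factorial_div_ne_zero hn hnN
  obtain ⟨f, hf⟩ := exists_map_univ_eq_div_nsmul (Nat.dvd_factorial hn hnN)
  rw [upperSemicontinuous_iff_isClosed_preimage]
  intro c
  rcases le_or_gt c 0 with hc | hc
  · convert isClosed_univ
    exact Set.eq_univ_of_forall fun x => hc.trans (Shat_nonneg hs_nonneg x)
  · have hpreimage : Shat s N n ⁻¹' Set.Ici c =
        ⋃ σ : Equiv.Perm (Fin N !), (· ∘ (f ∘ σ)) '' (s n ⁻¹' Set.Ici c) := by
      ext x
      simp only [Set.mem_preimage, Set.mem_Ici, le_Shat_iff hc hsymm hm,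
        isReplication_iff_exists_perm hf, Set.mem_iUnion, Set.mem_image]
      tauto
    rw [hpreimage]
    exact isClosed_iUnion_of_finite fun σ =>
      ((surjective_of_map_univ_eq_nsmul hm hf).comp σ.surjective).isClosedEmbedding_comp.isClosedMap
        _ (hs_usc.isClosed_preimage c)

theorem mul_Shat_le_sum_div_factorial (hn : 0 < n) (hnN : n ≤ N)
    (hsymm : ∀ (σ : Equiv.Perm (Fin n)) z, s n (z ∘ σ) = s n z) {a : I → ℝ} (ha : ∀ i, 0 ≤ a i)
    (hs_bound : ∀ y, s n y ≤ ∑ k, a (y k)) (x : Fin N ! → I) :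
    (N / n : ℝ) * Shat s N n x ≤ ∑ k, a (x k) / (N - 1)! := by
  rw [← Finset.sum_div]
  by_cases hx : ∃ y, IsReplication N n x y
  · obtain ⟨y, hy⟩ := hx
    have hcoef : (N / n : ℝ) = ((N ! / n : ℕ) : ℝ) / (N - 1)! := by
      rw [Nat.cast_div (Nat.dvd_factorial hn hnN) (by positivity),
        ← Nat.mul_factorial_pred (by omega)]
      push_cast
      field_simp
    rw [Shat_eq_of_isReplication hsymm (factorial_div_ne_zero hn hnN) hy, hy.sum_eq, nsmul_eq_mul,
      hcoef, div_mul_eq_mul_div]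
    gcongr
    exact hs_bound y
  · rw [Shat_eq_zero_of_forall_not_isReplication (not_exists.mp hx), mul_zero]
    exact div_nonneg (Finset.sum_nonneg fun k _ => ha _) (by positivity)

end Replication

theorem bigS_usc_and_bounded_general
    {I : Type*} [TopologicalSpace I] [PolishSpace I] [MeasurableSpace I]
    (μ : Measure I)
    (N' N : ℕ) (hN' : 2 ≤ N') (hNN : N' ≤ N)
    (s : ∀ n : ℕ, (Fin n → I) → ℝ)
    (hs_nonneg : ∀ n ∈ Finset.Icc N' N, ∀ x : Fin n → I, 0 ≤ s n x)
    (hs_usc : ∀ n ∈ Finset.Icc N' N, UpperSemicontinuous (s n))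
    (hs_symm : ∀ n ∈ Finset.Icc N' N, ∀ σ : Equiv.Perm (Fin n), ∀ x : Fin n → I,
      s n (x ∘ σ) = s n x)
    (a : I → ℝ) (ha_nonneg : ∀ i, 0 ≤ a i) (ha_lsc : LowerSemicontinuous a)
    (ha_int : Integrable a μ)
    (hs_bound : ∀ n ∈ Finset.Icc N' N, ∀ x : Fin n → I, s n x ≤ ∑ k, a (x k)) :
    UpperSemicontinuous (bigS s N' N hNN) ∧
    LowerSemicontinuous (fun i => a i / (Nat.factorial (N - 1) : ℝ)) ∧
    Integrable (fun i => a i / (Nat.factorial (N - 1) : ℝ)) μ ∧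
    (∀ x : Fin (Nat.factorial N) → I,
      bigS s N' N hNN x ≤ ∑ k, a (x k) / (Nat.factorial (N - 1) : ℝ)) := by
  have hrange : ∀ n ∈ Finset.Icc N' N, 0 < n ∧ n ≤ N := fun n hn => by
    rw [Finset.mem_Icc] at hn
    omega
  refine ⟨?_, ?_, ha_int.div_const _, fun x => Finset.sup'_le _ _ fun n hn => ?_⟩
  · refine UpperSemicontinuous.finset_sup' _ fun n hn => ?_
    exact (continuous_const_mul _).comp_upperSemicontinuous
      (upperSemicontinuous_Shat (hrange n hn).1 (hrange n hn).2 (hs_nonneg n hn) (hs_usc n hn)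
        (hs_symm n hn))
      (monotone_mul_left_of_nonneg (by positivity))
  · exact (continuous_id.div_const _).comp_lowerSemicontinuous ha_lsc
      (monotone_div_right_of_nonneg (by positivity))
  · exact mul_Shat_le_sum_div_factorial (hrange n hn).1 (hrange n hn).2 (hs_symm n hn) ha_nonneg
      (hs_bound n hn) x

/-- **Lemma 1.**  If each `s_n` is nonnegative, upper semicontinuous, symmetric, and
dominated by `∑_k a(x_k)` for a nonnegative lower semicontinuous `a ∈ L¹(μ)`, then
`S` is upper semicontinuous and, with `â = a/(N-1)!`, one has
`S(x) ≤ ∑_{k=1}^{N!} â(x_k)`, where `â` is lower semicontinuous and `μ`-integrable. -/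
theorem bigS_usc_and_bounded
    {I : Type*} [TopologicalSpace I] [PolishSpace I] [MeasurableSpace I] [BorelSpace I]
    (μ : Measure I) [IsFiniteMeasure μ]
    (N' N : ℕ) (hN' : 2 ≤ N') (hNN : N' ≤ N)
    (s : ∀ n : ℕ, (Fin n → I) → ℝ)
    (hs_nonneg : ∀ n ∈ Finset.Icc N' N, ∀ x : Fin n → I, 0 ≤ s n x)
    (hs_usc : ∀ n ∈ Finset.Icc N' N, UpperSemicontinuous (s n))
    (hs_symm : ∀ n ∈ Finset.Icc N' N, ∀ σ : Equiv.Perm (Fin n), ∀ x : Fin n → I,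
      s n (x ∘ σ) = s n x)
    (a : I → ℝ) (ha_nonneg : ∀ i, 0 ≤ a i) (ha_lsc : LowerSemicontinuous a)
    (ha_int : Integrable a μ)
    (hs_bound : ∀ n ∈ Finset.Icc N' N, ∀ x : Fin n → I, s n x ≤ ∑ k, a (x k)) :
    UpperSemicontinuous (bigS s N' N hNN) ∧
    LowerSemicontinuous (fun i => a i / (Nat.factorial (N - 1) : ℝ)) ∧
    Integrable (fun i => a i / (Nat.factorial (N - 1) : ℝ)) μ ∧
    (∀ x : Fin (Nat.factorial N) → I,
      bigS s N' N hNN x ≤ ∑ k, a (x k) / (Nat.factorial (N - 1) : ℝ)) :=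
  bigS_usc_and_bounded_general μ N' N hN' hNN s hs_nonneg hs_usc hs_symm a ha_nonneg ha_lsc ha_int
    hs_bound
end

section
/- There exists a partition {J_α}_{α∈A} of I^n such that the index set A is finite, each component J_α is a Borel subset of I^n, and no two distinct elements of the same component J_α lie in the same orbit of the coordinate-permutation action of the symmetric group S_n on I^n (equivalently, the quotient map to I^n modulo coordinate permutations is injective on each J_α). -/
/-!
It suffices to find an injective map `f` from `I` into a linear order whose strict order
`{(a, b) | f a < f b}` is Borel in `I × I`: the order pattern of `(f (x i))ᵢ` then cuts `I^n` into
finitely many Borel pieces, and a permutation preserving the pattern of `x` fixes `x`, because the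
rank of a value among the `f (x i)` determines it.

To build `f`, fix a well-order of `I`. For radii `r, ε > 0`, the cell of `p` is the union of the
balls `ball x ε` over the points `x` at distance `< r - 2ε` from `p` for which `p` is the least
point of `ball x r`; cells with distinct `p` are disjoint open sets. Countably many pairs `(r, ε)`
separate points, and `f a` is the lexicographically ordered sequence of indices of the cells
containing `a` (`⊤` if there is none). Every union of products of cells of one family is open,
so the lexicographic order is Borel even when `I` is not separable.
-/

open Set Function Metric MeasureTheory

universe u

section CellIndex

variable {X ι : Type*}

open Classical in
noncomputable def cellIndex (U : ι → Set X) (a : X) : WithTop ι :=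
  if h : ∃ p, a ∈ U p then h.choose else ⊤

theorem cellIndex_eq_coe_iff {U : ι → Set X} (hU : Pairwise (Disjoint on U)) {a : X} {p : ι} :
    cellIndex U a = p ↔ a ∈ U p := by
  rw [cellIndex]
  split_ifs with h
  · rw [WithTop.coe_inj]
    exact ⟨fun hp => hp ▸ h.choose_spec,
      fun ha => hU.eq (not_disjoint_iff.2 ⟨a, h.choose_spec, ha⟩)⟩
  · simp only [WithTop.top_ne_coe, false_iff]
    exact fun ha => h ⟨p, ha⟩

theorem cellIndex_preimage_coe {U : ι → Set X} (hU : Pairwise (Disjoint on U)) (p : ι) :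
    cellIndex U ⁻¹' {(p : WithTop ι)} = U p :=
  ext fun _ => cellIndex_eq_coe_iff hU

theorem cellIndex_preimage_top (U : ι → Set X) : cellIndex U ⁻¹' {⊤} = (⋃ p, U p)ᶜ := by
  ext a
  simp only [mem_preimage, mem_singleton_iff, cellIndex, mem_compl_iff, mem_iUnion]
  split_ifs with h <;> simp [h]

end CellIndex

theorem measurableSet_borel_prod {X Y : Type*} [TopologicalSpace X] [TopologicalSpace Y]
    {s : Set X} {t : Set Y} (hs : MeasurableSet[borel X] s) (ht : MeasurableSet[borel Y] t) :
    MeasurableSet[borel (X × Y)] (s ×ˢ t) := by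
  borelize X Y
  exact prod_le_borel_prod _ (hs.prod ht)

theorem measurableSet_cellIndex_rel {X ι : Type*} [TopologicalSpace X] {U : ι → Set X}
    (hU : ∀ p, IsOpen (U p)) (hd : Pairwise (Disjoint on U)) (R : WithTop ι → WithTop ι → Prop) :
    MeasurableSet[borel (X × X)] {z | R (cellIndex U z.1) (cellIndex U z.2)} := by
  borelize X (X × X)
  have hF : IsClosed (⋃ p, U p)ᶜ := (isOpen_iUnion hU).isClosed_compl
  have hW : {z : X × X | R (cellIndex U z.1) (cellIndex U z.2)} =
      ⋃ (s : WithTop ι) (t : WithTop ι) (_ : R s t),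
        (cellIndex U ⁻¹' {s}) ×ˢ (cellIndex U ⁻¹' {t}) := by
    ext z; simp
  rw [hW]
  have hsplit : ∀ f : WithTop ι → Set (X × X), ⋃ s, f s = f ⊤ ∪ ⋃ p : ι, f p := fun f =>
    iUnion_option f
  simp only [hsplit, cellIndex_preimage_top, cellIndex_preimage_coe hd, iUnion_union_distrib]
  refine ((MeasurableSet.iUnion fun _ => (hF.prod hF).measurableSet).union ?_).union
    (MeasurableSet.union ?_ ?_)
  · rw [← prod_iUnion₂]
    exact measurableSet_borel_prod hF.measurableSet (isOpen_biUnion fun p _ => hU p).measurableSet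
  · rw [← iUnion₂_prod_const]
    exact measurableSet_borel_prod (isOpen_biUnion fun p _ => hU p).measurableSet hF.measurableSet
  · exact (isOpen_iUnion fun p => isOpen_biUnion fun q _ => (hU p).prod (hU q)).measurableSet

section LexCode

variable {X ι : Type*} {U : ℕ → ι → Set X}

noncomputable def lexCode (U : ℕ → ι → Set X) (a : X) : Lex (ℕ → WithTop ι) :=
  toLex fun N => cellIndex (U N) a

theorem lexCode_injective (hd : ∀ N, Pairwise (Disjoint on U N))
    (hsep : ∀ a b, a ≠ b → ∃ N p, a ∈ U N p ∧ b ∉ U N p) : Injective (lexCode U) := by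
  intro a b hab
  by_contra hne
  obtain ⟨N, p, ha, hb⟩ := hsep a b hne
  have hcell : cellIndex (U N) a = cellIndex (U N) b := congrFun hab N
  rw [← cellIndex_eq_coe_iff (hd N)] at ha hb
  exact hb (hcell ▸ ha)

theorem measurableSet_lexCode_lt [TopologicalSpace X] [LinearOrder ι]
    (hU : ∀ N p, IsOpen (U N p)) (hd : ∀ N, Pairwise (Disjoint on U N)) :
    MeasurableSet[borel (X × X)] {z | lexCode U z.1 < lexCode U z.2} := by
  have hlt : {z : X × X | lexCode U z.1 < lexCode U z.2} =
      ⋃ N, (⋂ M < N, {z | cellIndex (U M) z.1 = cellIndex (U M) z.2}) ∩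
        {z | cellIndex (U N) z.1 < cellIndex (U N) z.2} := by
    ext z
    simp only [mem_iUnion, mem_inter_iff, mem_iInter]
    rfl
  rw [hlt]
  borelize (X × X)
  exact .iUnion fun N => (MeasurableSet.iInter fun M => MeasurableSet.iInter fun _ =>
    measurableSet_cellIndex_rel (hU M) (hd M) _).inter (measurableSet_cellIndex_rel (hU N) (hd N) _)

end LexCode

section MetricCells

variable {X : Type*} [MetricSpace X]

def wellOrderCell (r ε : ℝ) (p : X) : Set X :=
  ⋃ (x : X) (_ : dist x p < r - 2 * ε) (_ : ∀ q, dist x q < r → ¬ WellOrderingRel q p), ball x ε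

theorem isOpen_wellOrderCell (r ε : ℝ) (p : X) : IsOpen (wellOrderCell r ε p) :=
  isOpen_biUnion fun _ _ => isOpen_iUnion fun _ => isOpen_ball

theorem mem_wellOrderCell {r ε : ℝ} {p a : X} :
    a ∈ wellOrderCell r ε p ↔ ∃ x, dist x p < r - 2 * ε ∧
      (∀ q, dist x q < r → ¬ WellOrderingRel q p) ∧ dist a x < ε := by
  simp only [wellOrderCell, mem_iUnion, mem_ball, exists_prop]

theorem disjoint_wellOrderCell_of_rel {r ε : ℝ} {p q : X} (hqp : WellOrderingRel q p) :
    Disjoint (wellOrderCell r ε p) (wellOrderCell r ε q) := by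
  refine Set.disjoint_left.2 fun a hap haq => ?_
  obtain ⟨x, -, hx_min, hax⟩ := mem_wellOrderCell.1 hap
  obtain ⟨y, hyq, -, hay⟩ := mem_wellOrderCell.1 haq
  refine hx_min q ?_ hqp
  calc dist x q ≤ dist x a + dist a y + dist y q := dist_triangle4 x a y q
    _ < ε + ε + (r - 2 * ε) := by gcongr; rwa [dist_comm]
    _ = r := by ring

theorem pairwise_disjoint_wellOrderCell (r ε : ℝ) :
    Pairwise (Disjoint on (wellOrderCell r ε : X → Set X)) := by
  intro p q hpq
  rcases trichotomous_of WellOrderingRel p q with h | h | h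
  · exact (disjoint_wellOrderCell_of_rel h).symm
  · exact absurd h hpq
  · exact disjoint_wellOrderCell_of_rel h

theorem wellOrderCell_subset_ball {r ε : ℝ} (hε : 0 ≤ ε) (p : X) :
    wellOrderCell r ε p ⊆ ball p r := by
  intro a ha
  obtain ⟨x, hxp, -, hax⟩ := mem_wellOrderCell.1 ha
  calc dist a p ≤ dist a x + dist x p := dist_triangle a x p
    _ < ε + (r - 2 * ε) := by gcongr
    _ ≤ r := by linarith

theorem exists_mem_wellOrderCell {r : ℝ} (hr : 0 < r) (a : X) :
    ∃ p, dist a p < r ∧ ∀ ε, 0 < ε → 2 * ε < r - dist a p → a ∈ wellOrderCell r ε p := by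
  obtain ⟨p, hp, hp_min⟩ :=
    WellOrderingRel.isWellOrder.wf.has_min (ball a r) ⟨a, mem_ball_self hr⟩
  refine ⟨p, mem_ball'.1 hp, fun ε hε hεr => mem_wellOrderCell.2
    ⟨a, by linarith, fun q hq => hp_min q (mem_ball'.2 hq), by simpa using hε⟩⟩

noncomputable def wellOrderCells (N : ℕ) : X → Set X :=
  wellOrderCell (1 / (N.unpair.1 + 1)) (1 / (N.unpair.2 + 1))

theorem wellOrderCells_pair (k n : ℕ) :
    wellOrderCells (Nat.pair k n) = (wellOrderCell (1 / (k + 1)) (1 / (n + 1)) : X → Set X) := by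
  rw [wellOrderCells, Nat.unpair_pair]

theorem exists_wellOrderCells_separating {a b : X} (hab : a ≠ b) :
    ∃ N p, a ∈ wellOrderCells N p ∧ b ∉ wellOrderCells N p := by
  obtain ⟨k, hk⟩ := exists_nat_one_div_lt (half_pos (dist_pos.2 hab))
  obtain ⟨p, hap, hp⟩ := exists_mem_wellOrderCell (r := 1 / (k + 1)) (by positivity) a
  obtain ⟨n, hn⟩ := exists_nat_one_div_lt (half_pos (sub_pos.2 hap))
  have hε : (0 : ℝ) < 1 / (n + 1) := by positivity
  refine ⟨Nat.pair k n, p, ?_, fun hb => ?_⟩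
  · rw [wellOrderCells_pair]
    exact hp _ hε (by linarith)
  · rw [wellOrderCells_pair] at hb
    have hbp := mem_ball.1 (wellOrderCell_subset_ball hε.le p hb)
    linarith [dist_triangle_right a b p]

theorem exists_injective_linearOrder_measurableSet_lt (X : Type u) [MetricSpace X] :
    ∃ (α : Type u) (_ : LinearOrder α) (f : X → α),
      Injective f ∧ MeasurableSet[borel (X × X)] {z | f z.1 < f z.2} := by
  classical
  let _ : LinearOrder X := linearOrderOfSTO WellOrderingRel
  exact ⟨_, inferInstance, lexCode wellOrderCells,
    lexCode_injective (fun _ => pairwise_disjoint_wellOrderCell _ _)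
      fun _ _ => exists_wellOrderCells_separating,
    measurableSet_lexCode_lt (fun _ => isOpen_wellOrderCell _ _)
      fun _ => pairwise_disjoint_wellOrderCell _ _⟩

end MetricCells

open Finset in
theorem comp_perm_eq_self_of_forall_lt_iff {ι α : Type*} [Fintype ι] [LinearOrder α]
    {x : ι → α} {σ : Equiv.Perm ι} (h : ∀ i j, x i < x j ↔ x (σ i) < x (σ j)) : x ∘ σ = x := by
  classical
  let rank (y : α) : ℕ := #{j | x j < y}
  have rank_perm (i : ι) : rank (x (σ i)) = rank (x i) := calc
    rank (x (σ i)) = #{j | x (σ j) < x (σ i)} :=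
      (card_equiv σ (by simp)).symm
    _ = rank (x i) := by simp only [rank, ← h]
  have rank_lt {i i' : ι} (hlt : x i' < x i) : rank (x i') < rank (x i) :=
    have hsub : univ.filter (x · < x i') ⊆ univ.filter (x · < x i) :=
      monotone_filter_right _ fun _ _ hj => hj.trans hlt
    card_lt_card <| (Finset.ssubset_iff_of_subset hsub).2 ⟨i', by simpa using hlt, by simp⟩
  funext i
  rcases lt_trichotomy (x (σ i)) (x i) with hlt | heq | hgt
  · exact absurd (rank_perm i) (rank_lt hlt).ne
  · exact heq
  · exact absurd (rank_perm i) (rank_lt hgt).ne'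

theorem exists_fin_partition_into_fibers {X β : Type*} [Finite β] (f : X → β) :
    ∃ (m : ℕ) (J : Fin m → Set X), (∀ x, ∃! α, x ∈ J α) ∧ ∀ α, ∃ b, J α = f ⁻¹' {b} := by
  obtain ⟨m, ⟨e⟩⟩ := Finite.exists_equiv_fin β
  refine ⟨m, fun α => f ⁻¹' {e.symm α}, fun x => ⟨e (f x), by simp, fun α hα => ?_⟩,
    fun α => ⟨_, rfl⟩⟩
  have hfx : f x = e.symm α := hα
  simp [hfx]

theorem measurableSet_borel_fiber_pattern {X ι : Type*} [TopologicalSpace X] [Countable ι]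
    {R : X → X → Prop} (hR : MeasurableSet[borel (X × X)] {z | R z.1 z.2}) (b : ι → ι → Prop) :
    MeasurableSet[borel (ι → X)] {x | (fun i j => R (x i) (x j)) = b} := by
  borelize (X × X) (ι → X)
  have hpattern : Measurable fun (x : ι → X) i j => R (x i) (x j) :=
    measurable_pi_lambda _ fun i => measurable_pi_lambda _ fun j => measurable_to_prop <| by
      rw [preimage_singleton_true]
      have hcont : Continuous fun x : ι → X => (x i, x j) :=
        (continuous_apply i).prodMk (continuous_apply j)
      exact hcont.borel_measurable hR
  exact hpattern (measurableSet_singleton b)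

theorem exists_finite_borel_partition_injective_on_orbits_general
    {I : Type*} [MetricSpace I] (n : ℕ) :
    ∃ (m : ℕ) (J : Fin m → Set (Fin n → I)),
      (∀ x : Fin n → I, ∃! α : Fin m, x ∈ J α) ∧
      (∀ α : Fin m, @MeasurableSet _ (borel (Fin n → I)) (J α)) ∧
      (∀ α : Fin m, ∀ x ∈ J α, ∀ y ∈ J α,
        (∃ σ : Equiv.Perm (Fin n), y = x ∘ σ) → x = y) := by
  obtain ⟨α, _, f, hf_inj, hf_lt⟩ := exists_injective_linearOrder_measurableSet_lt I
  let pattern (x : Fin n → I) (i j : Fin n) : Prop := f (x i) < f (x j)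
  obtain ⟨m, J, hJ_part, hJ_fiber⟩ := exists_fin_partition_into_fibers pattern
  refine ⟨m, J, hJ_part, fun β => ?_, fun β x hx y hy ⟨σ, hσ⟩ => ?_⟩
  · obtain ⟨b, hb⟩ := hJ_fiber β
    rw [hb]
    exact measurableSet_borel_fiber_pattern (R := fun a b => f a < f b) hf_lt b
  · obtain ⟨b, hb⟩ := hJ_fiber β
    rw [hb] at hx hy
    have hxy : pattern x = pattern y := hx.trans hy.symm
    have hfix : (f ∘ x) ∘ σ = f ∘ x := comp_perm_eq_self_of_forall_lt_iff fun i j => by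
      simpa [pattern, hσ] using congrFun (congrFun hxy i) j |>.to_iff
    rw [hσ]
    exact hf_inj.comp_left hfix.symm

/-- **Lemma 2.**  For a metric space `I` and `n ≥ 2` there is a finite partition
`{J_α}` of `I^n` into Borel sets (with respect to the Borel σ-algebra of the product
topology) such that no two distinct points of the same component lie in the same orbit
of the coordinate-permutation action of `S_n` on `I^n`. -/
theorem exists_finite_borel_partition_injective_on_orbits
    {I : Type*} [MetricSpace I] (n : ℕ) (hn : 2 ≤ n) :
    ∃ (m : ℕ) (J : Fin m → Set (Fin n → I)),
      (∀ x : Fin n → I, ∃! α : Fin m, x ∈ J α) ∧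
      (∀ α : Fin m, @MeasurableSet _ (borel (Fin n → I)) (J α)) ∧
      (∀ α : Fin m, ∀ x ∈ J α, ∀ y ∈ J α,
        (∃ σ : Equiv.Perm (Fin n), y = x ∘ σ) → x = y) :=
  exists_finite_borel_partition_injective_on_orbits_general n
end

section
/- The supremum of the total surplus ∑_{n=N'}^N (1/n) ∫_{I^n} s_n dγ_n over all assignments is attained: there exists an assignment (γ_n)_{N'≤n≤N} achieving the supremum. -/
open MeasureTheory

/-- An assignment in symmetric form: a family of finite symmetric measures `γ n` on `I^n`
for `N' ≤ n ≤ N`, whose (weighted) first marginals sum to `μ`. -/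
def IsAssignment {I : Type*} [MeasurableSpace I]
    (μ : Measure I) (N' N : ℕ) (γ : ∀ n : ℕ, Measure (Fin n → I)) : Prop :=
  (∀ n ∈ Finset.Icc N' N, IsFiniteMeasure (γ n)) ∧
  (∀ n ∈ Finset.Icc N' N, ∀ σ : Equiv.Perm (Fin n),
      Measure.map (fun x => x ∘ σ) (γ n) = γ n) ∧
  (∀ A : Set I, MeasurableSet A →
      ∑ n ∈ Finset.Icc N' N,
        γ n {x : Fin n → I | ∀ k : Fin n, (k : ℕ) = 0 → x k ∈ A} = μ A)

/-- The total surplus of an assignment: `∑_{n=N'}^N (1/n) ∫_{I^n} s_n dγ_n`. -/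
noncomputable def totalSurplus {I : Type*} [MeasurableSpace I]
    (N' N : ℕ) (s : ∀ n : ℕ, (Fin n → I) → ℝ)
    (γ : ∀ n : ℕ, Measure (Fin n → I)) : ℝ :=
  ∑ n ∈ Finset.Icc N' N, (n : ℝ)⁻¹ * ∫ x, s n x ∂(γ n)

/-! Give finite measures the weak topology. Every component of an assignment has mass at most
`μ(I)`, because its first marginal is dominated by `μ`; on a compact metric space a
mass-bounded set of finite measures is weakly compact (Prokhorov, via Riesz–Markov–Kakutani).
The symmetry and marginal constraints are closed because pushing forward along a continuous map
is weakly continuous, so the assignments form a compact set. The total surplus integrates the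
continuous functions `s n` and is therefore weakly continuous, so it attains its maximum. -/

namespace MeasureTheory.FiniteMeasure

variable {ι : Type*} [Fintype ι] {Y : ι → Type*} [∀ i, MeasurableSpace (Y i)]
  {X : Type*} [MeasurableSpace X] {p : ∀ i, Y i → X}

lemma sum_map_eq_iff (hp : ∀ i, Measurable (p i)) (ν : ∀ i, FiniteMeasure (Y i))
    (μ : FiniteMeasure X) :
    ∑ i, (ν i).map (p i) = μ ↔
      ∀ A, MeasurableSet A → ∑ i, (ν i : Measure (Y i)) (p i ⁻¹' A) = (μ : Measure X) A := by
  rw [← toMeasure_injective.eq_iff, Measure.ext_iff, toMeasure_sum]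
  refine forall₂_congr fun A hA => ?_
  simp only [Measure.coe_finsetSum, Finset.sum_apply, toMeasure_map,
    Measure.map_apply (hp _) hA]

lemma mass_le_of_sum_map_eq (hp : ∀ i, Measurable (p i)) {ν : ∀ i, FiniteMeasure (Y i)}
    {μ : FiniteMeasure X} (h : ∑ i, (ν i).map (p i) = μ) (i : ι) : (ν i).mass ≤ μ.mass := by
  rw [← ENNReal.coe_le_coe, ennreal_mass, ennreal_mass,
    ← (sum_map_eq_iff hp ν μ).1 h Set.univ MeasurableSet.univ]
  exact Finset.single_le_sum (f := fun j => (ν j : Measure (Y j)) (p j ⁻¹' Set.univ))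
    (fun _ _ => zero_le) (Finset.mem_univ i)

variable [∀ i, TopologicalSpace (Y i)] [∀ i, BorelSpace (Y i)] [∀ i, T2Space (Y i)]
  [∀ i, CompactSpace (Y i)] [TopologicalSpace X] [HasOuterApproxClosed X] [BorelSpace X]

theorem isCompact_setOf_sum_map_eq (hp : ∀ i, Continuous (p i)) (μ : FiniteMeasure X) :
    IsCompact {ν : ∀ i, FiniteMeasure (Y i) | ∑ i, (ν i).map (p i) = μ} := by
  refine (isCompact_univ_pi fun i =>
    isCompact_setOfPred_finiteMeasure_le_of_compactSpace (Y i) μ.mass).of_isClosed_subset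
    (isClosed_eq ?_ continuous_const)
    fun ν hν i _ => mass_le_of_sum_map_eq (fun i => (hp i).measurable) hν i
  exact continuous_finsetSum _ fun i _ => (continuous_map (hp i)).comp (continuous_apply i)

end MeasureTheory.FiniteMeasure

section Assignment

open FiniteMeasure

variable {I : Type*} {N' N : ℕ}

def headCoord {n : ℕ} (hn : 0 < n) (x : Fin n → I) : I := x ⟨0, hn⟩

lemma preimage_headCoord {n : ℕ} (hn : 0 < n) (A : Set I) :
    headCoord hn ⁻¹' A = {x : Fin n → I | ∀ k : Fin n, (k : ℕ) = 0 → x k ∈ A} := by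
  ext x
  exact ⟨fun hx k hk => (Fin.ext hk : k = ⟨0, hn⟩) ▸ hx, fun hx => hx ⟨0, hn⟩ rfl⟩

lemma pos_of_mem_Icc (hN' : 0 < N') (n : Finset.Icc N' N) : 0 < (n : ℕ) :=
  hN'.trans_le (Finset.mem_Icc.1 n.2).1

variable [MeasurableSpace I]

lemma measurable_headCoord {n : ℕ} (hn : 0 < n) : Measurable (headCoord (I := I) hn) :=
  measurable_pi_apply _

/-- `IsAssignment` recast as a set of families of finite measures indexed by the admissible sizes
only, so that it lives in a product of weakly topologized spaces. -/
def assignmentFamilies (μ : Measure I) [IsFiniteMeasure μ] (hN' : 0 < N') :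
    Set (∀ n : Finset.Icc N' N, FiniteMeasure (Fin n → I)) :=
  {ν | (∀ (n : Finset.Icc N' N) (σ : Equiv.Perm (Fin n)), (ν n).map (fun x => x ∘ σ) = ν n) ∧
    ∑ n, (ν n).map (headCoord (pos_of_mem_Icc hN' n)) = ⟨μ, ‹_›⟩}

lemma isCompact_assignmentFamilies [TopologicalSpace I] [TopologicalSpace.MetrizableSpace I]
    [CompactSpace I] [BorelSpace I]
    (μ : Measure I) [IsFiniteMeasure μ] (hN' : 0 < N') :
    IsCompact (assignmentFamilies (N := N) μ hN') := by
  have hsymm : IsClosed {ν : ∀ n : Finset.Icc N' N, FiniteMeasure (Fin n → I) |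
      ∀ (n : Finset.Icc N' N) (σ : Equiv.Perm (Fin n)), (ν n).map (fun x => x ∘ σ) = ν n} := by
    simp only [Set.ofPred_forall]
    exact isClosed_iInter fun n => isClosed_iInter fun σ =>
      isClosed_eq ((continuous_map (by fun_prop)).comp (continuous_apply n)) (continuous_apply n)
  exact (isCompact_setOf_sum_map_eq (p := fun n => headCoord (pos_of_mem_Icc hN' n))
    (fun n => continuous_apply _) ⟨μ, ‹_›⟩).inter_left hsymm

def extendFamily (ν : ∀ n : Finset.Icc N' N, FiniteMeasure (Fin n → I)) (n : ℕ) :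
    Measure (Fin n → I) :=
  if h : n ∈ Finset.Icc N' N then ν ⟨n, h⟩ else 0

def restrictFamily {μ : Measure I} {γ : ∀ n : ℕ, Measure (Fin n → I)}
    (hγ : IsAssignment μ N' N γ) (n : Finset.Icc N' N) : FiniteMeasure (Fin n → I) :=
  ⟨γ n, hγ.1 n n.2⟩

lemma isAssignment_extendFamily {μ : Measure I} [IsFiniteMeasure μ] {hN' : 0 < N'}
    {ν : ∀ n : Finset.Icc N' N, FiniteMeasure (Fin n → I)} (hν : ν ∈ assignmentFamilies μ hN') :
    IsAssignment μ N' N (extendFamily ν) := by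
  refine ⟨fun n hn => ?_, fun n hn σ => ?_, fun A hA => ?_⟩
  · simp only [extendFamily, dif_pos hn]; infer_instance
  · simpa only [extendFamily, dif_pos hn, ← toMeasure_map] using
      congrArg toMeasure (hν.1 ⟨n, hn⟩ σ)
  · have := (sum_map_eq_iff (fun n => measurable_headCoord _) ν _).1 hν.2 A hA
    rw [toMeasure_mk] at this
    rw [← this, ← Finset.sum_coe_sort (Finset.Icc N' N)]
    refine Finset.sum_congr rfl fun n _ => ?_
    simp only [extendFamily, dif_pos n.2, preimage_headCoord]

lemma restrictFamily_mem {μ : Measure I} [IsFiniteMeasure μ] (hN' : 0 < N')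
    {γ : ∀ n : ℕ, Measure (Fin n → I)} (hγ : IsAssignment μ N' N γ) :
    restrictFamily hγ ∈ assignmentFamilies μ hN' := by
  refine ⟨fun n σ => toMeasure_injective ?_, ?_⟩
  · exact hγ.2.1 n n.2 σ
  · refine (sum_map_eq_iff (fun n => measurable_headCoord _) _ _).2 fun A hA => ?_
    rw [toMeasure_mk, ← hγ.2.2 A hA, ← Finset.sum_coe_sort (Finset.Icc N' N)]
    simp only [restrictFamily, toMeasure_mk, preimage_headCoord]

lemma isAssignment_diagonal (μ : Measure I) [IsFiniteMeasure μ] (hN' : 0 < N') (hNN : N' ≤ N) :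
    IsAssignment μ N' N
      (fun n => if n = N' then μ.map (fun x (_ : Fin n) => x) else 0) := by
  have hdiag (n : ℕ) : Measurable (fun x (_ : Fin n) => (x : I)) := by fun_prop
  refine ⟨fun n _ => ?_, fun n _ σ => ?_, fun A hA => ?_⟩ <;> dsimp only
  · split <;> infer_instance
  · split
    · rw [Measure.map_map (by fun_prop) (hdiag n)]
      rfl
    · exact Measure.map_zero _
  · rw [Finset.sum_eq_single_of_mem N' (Finset.mem_Icc.2 ⟨le_rfl, hNN⟩)
      fun n _ hn => by simp only [if_neg hn, Measure.coe_zero, Pi.zero_apply],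
      if_pos rfl, ← preimage_headCoord hN', Measure.map_apply (hdiag N')
      (measurable_headCoord hN' hA)]
    rfl

noncomputable def familySurplus (s : ∀ n : ℕ, (Fin n → I) → ℝ)
    (ν : ∀ n : Finset.Icc N' N, FiniteMeasure (Fin n → I)) : ℝ :=
  ∑ n : Finset.Icc N' N, ((n : ℕ) : ℝ)⁻¹ * ∫ x, s n x ∂(ν n : Measure (Fin n → I))

lemma totalSurplus_extendFamily (s : ∀ n : ℕ, (Fin n → I) → ℝ)
    (ν : ∀ n : Finset.Icc N' N, FiniteMeasure (Fin n → I)) :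
    totalSurplus N' N s (extendFamily ν) = familySurplus s ν := by
  rw [totalSurplus, familySurplus, ← Finset.sum_coe_sort (Finset.Icc N' N)]
  refine Finset.sum_congr rfl fun n _ => ?_
  rw [extendFamily, dif_pos n.2]

lemma totalSurplus_eq_familySurplus_restrictFamily (s : ∀ n : ℕ, (Fin n → I) → ℝ)
    {μ : Measure I} {γ : ∀ n : ℕ, Measure (Fin n → I)} (hγ : IsAssignment μ N' N γ) :
    totalSurplus N' N s γ = familySurplus s (restrictFamily hγ) := by
  rw [totalSurplus, familySurplus, ← Finset.sum_coe_sort (Finset.Icc N' N)]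
  rfl

lemma continuous_familySurplus [TopologicalSpace I] [TopologicalSpace.MetrizableSpace I]
    [CompactSpace I] [BorelSpace I]
    {s : ∀ n : ℕ, (Fin n → I) → ℝ} (hs : ∀ n ∈ Finset.Icc N' N, Continuous (s n)) :
    Continuous (familySurplus (N' := N') (N := N) s) :=
  continuous_finsetSum _ fun n _ => continuous_const.mul <|
    (continuous_integral_continuousMap (⟨s n, hs n n.2⟩ : C(Fin n → I, ℝ))).comp
      (continuous_apply n)

end Assignment

theorem exists_maximizing_assignment_general
    {I : Type*} [MetricSpace I] [CompactSpace I] [MeasurableSpace I] [BorelSpace I]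
    (μ : Measure I) [IsFiniteMeasure μ]
    (N' N : ℕ) (hN' : 2 ≤ N') (hNN : N' ≤ N)
    (s : ∀ n : ℕ, (Fin n → I) → ℝ)
    (hs_cont : ∀ n ∈ Finset.Icc N' N, Continuous (s n)) :
    ∃ γ : ∀ n : ℕ, Measure (Fin n → I), IsAssignment μ N' N γ ∧
      ∀ γ' : ∀ n : ℕ, Measure (Fin n → I), IsAssignment μ N' N γ' →
        totalSurplus N' N s γ' ≤ totalSurplus N' N s γ := by
  have hN'pos : 0 < N' := by omega
  obtain ⟨ν, hν, hmax⟩ := (isCompact_assignmentFamilies μ hN'pos).exists_isMaxOn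
    ⟨_, restrictFamily_mem hN'pos (isAssignment_diagonal μ hN'pos hNN)⟩
    (continuous_familySurplus hs_cont).continuousOn
  refine ⟨extendFamily ν, isAssignment_extendFamily hν, fun γ' hγ' => ?_⟩
  rw [totalSurplus_extendFamily, totalSurplus_eq_familySurplus_restrictFamily s hγ']
  exact hmax (restrictFamily_mem hN'pos hγ')

/-- **Lemma 7 (the maximum is attained).**  There exists an assignment maximizing the
total surplus over all assignments. -/
theorem exists_maximizing_assignment
    {I : Type*} [MetricSpace I] [CompactSpace I] [MeasurableSpace I] [BorelSpace I]
    (μ : Measure I) [IsFiniteMeasure μ]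
    (N' N : ℕ) (hN' : 2 ≤ N') (hNN : N' ≤ N)
    (s : ∀ n : ℕ, (Fin n → I) → ℝ)
    (hs_nonneg : ∀ n ∈ Finset.Icc N' N, ∀ x : Fin n → I, 0 ≤ s n x)
    (hs_cont : ∀ n ∈ Finset.Icc N' N, Continuous (s n))
    (hs_symm : ∀ n ∈ Finset.Icc N' N, ∀ σ : Equiv.Perm (Fin n), ∀ x : Fin n → I,
      s n (x ∘ σ) = s n x) :
    ∃ γ : ∀ n : ℕ, Measure (Fin n → I), IsAssignment μ N' N γ ∧
      ∀ γ' : ∀ n : ℕ, Measure (Fin n → I), IsAssignment μ N' N γ' →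
        totalSurplus N' N s γ' ≤ totalSurplus N' N s γ :=
  exists_maximizing_assignment_general μ N' N hN' hNN s hs_cont
end

section
/- If S : I^m → ℝ is symmetric, then the supremum of ∫_{I^m} S dγ̂ over all γ̂ ∈ Γ_sym equals the supremum of ∫_{I^m} S dγ̂ over all γ̂ ∈ Γ (without the symmetry restriction). -/
open MeasureTheory

/-- `Γ`: the set of finite measures on `I^m` all of whose one-dimensional marginals
equal `μ`. -/
def Gamma {I : Type*} [MeasurableSpace I] (μ : Measure I) (m : ℕ) :
    Set (Measure (Fin m → I)) :=
  {γ | IsFiniteMeasure γ ∧ (∀ i : Fin m, Measure.map (fun x => x i) γ = μ)}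

/-- `Γ_sym`: the subset of `Γ` of measures invariant under every coordinate
permutation. -/
def GammaSym {I : Type*} [MeasurableSpace I] (μ : Measure I) (m : ℕ) :
    Set (Measure (Fin m → I)) :=
  {γ | IsFiniteMeasure γ ∧
    (∀ σ : Equiv.Perm (Fin m), Measure.map (fun x => x ∘ σ) γ = γ) ∧
    (∀ i : Fin m, Measure.map (fun x => x i) γ = μ)}

/-! Averaging a transport plan `γ` over all permutations of the coordinates gives a symmetric
plan with the same marginals (each marginal of a permuted plan is some marginal of `γ`, hence
`μ`), and for a symmetric cost every permuted plan has the same value as `γ`, so the average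
does too. Thus each value attained on `Γ` is attained on `Γ_sym`. -/

open scoped NNReal

namespace MeasureTheory.Measure

variable {ι α : Type*} [MeasurableSpace α]

def permCoords (σ : Equiv.Perm ι) : (ι → α) ≃ᵐ (ι → α) :=
  MeasurableEquiv.arrowCongr' σ.symm (MeasurableEquiv.refl α)

@[simp]
lemma permCoords_apply (σ : Equiv.Perm ι) (x : ι → α) : permCoords σ x = x ∘ σ := rfl

variable [Fintype ι] [DecidableEq ι]

noncomputable def symmetrize (γ : Measure (ι → α)) : Measure (ι → α) :=
  (Fintype.card (Equiv.Perm ι) : ℝ≥0)⁻¹ • ∑ σ : Equiv.Perm ι, γ.map (permCoords σ)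

instance (γ : Measure (ι → α)) [IsFiniteMeasure γ] : IsFiniteMeasure (symmetrize γ) := by
  unfold symmetrize
  infer_instance

lemma map_permCoords_symmetrize (γ : Measure (ι → α)) (τ : Equiv.Perm ι) :
    (symmetrize γ).map (permCoords τ) = symmetrize γ := by
  have hmap_mul : ∀ σ : Equiv.Perm ι,
      (γ.map (permCoords σ)).map (permCoords τ) = γ.map (permCoords (σ * τ)) := fun σ => by
    rw [map_map (permCoords τ).measurable (permCoords σ).measurable]
    rfl
  rw [symmetrize, Measure.map_smul, map_finset_sum' (permCoords τ).measurable.aemeasurable]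
  simp only [hmap_mul]
  exact congrArg _ (Equiv.sum_comp (Equiv.mulRight τ) fun σ => γ.map (permCoords σ))

lemma map_eval_symmetrize {γ : Measure (ι → α)} {μ : Measure α}
    (hγ : ∀ i, γ.map (fun x => x i) = μ) (i : ι) :
    (symmetrize γ).map (fun x => x i) = μ := by
  have hmarg : ∀ σ : Equiv.Perm ι, (γ.map (permCoords σ)).map (fun x => x i) = μ := fun σ => by
    rw [map_map (measurable_pi_apply i) (permCoords σ).measurable]
    exact hγ (σ i)
  rw [symmetrize, Measure.map_smul, map_finset_sum' (measurable_pi_apply i).aemeasurable]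
  simp only [hmarg, Finset.sum_const, Finset.card_univ, ← Nat.cast_smul_eq_nsmul ℝ≥0, smul_smul]
  rw [inv_mul_cancel₀ (by simp), one_smul]

lemma integral_symmetrize {E : Type*} [NormedAddCommGroup E] [NormedSpace ℝ E]
    {f : (ι → α) → E} (hf : ∀ σ : Equiv.Perm ι, ∀ x, f (x ∘ σ) = f x) (γ : Measure (ι → α)) :
    ∫ x, f x ∂symmetrize γ = ∫ x, f x ∂γ := by
  have hcomp : ∀ σ : Equiv.Perm ι, f ∘ permCoords σ = f := fun σ => funext (hf σ)
  have hint : ∀ σ : Equiv.Perm ι, Integrable f (γ.map (permCoords σ)) ↔ Integrable f γ :=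
    fun σ => by rw [integrable_map_equiv, hcomp]
  have hval : ∀ σ : Equiv.Perm ι, ∫ x, f x ∂γ.map (permCoords σ) = ∫ x, f x ∂γ :=
    fun σ => by rw [integral_map_equiv, ← Function.comp_def f, hcomp]
  rw [symmetrize, integral_smul_nnreal_measure]
  by_cases hfγ : Integrable f γ
  · rw [integral_finsetSum_measure fun σ _ => (hint σ).2 hfγ]
    simp only [hval, Finset.sum_const, Finset.card_univ]
    rw [← Nat.cast_smul_eq_nsmul ℝ≥0, smul_smul, inv_mul_cancel₀ (by simp), one_smul]
  · have hfsum : ¬Integrable f (∑ σ : Equiv.Perm ι, γ.map (permCoords σ)) := by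
      rw [integrable_finsetSum_measure]
      exact fun h => hfγ ((hint 1).1 (h 1 (Finset.mem_univ 1)))
    rw [integral_undef hfγ, integral_undef hfsum, smul_zero]

end MeasureTheory.Measure

open MeasureTheory.Measure

lemma gammaSym_subset_gamma {I : Type*} [MeasurableSpace I] (μ : Measure I) (m : ℕ) :
    GammaSym μ m ⊆ Gamma μ m :=
  fun _ ⟨hfin, _, hmarg⟩ => ⟨hfin, hmarg⟩

lemma symmetrize_mem_gammaSym {I : Type*} [MeasurableSpace I] {μ : Measure I} {m : ℕ}
    {γ : Measure (Fin m → I)} (hγ : γ ∈ Gamma μ m) : symmetrize γ ∈ GammaSym μ m :=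
  haveI := hγ.1
  ⟨inferInstance, map_permCoords_symmetrize γ, map_eval_symmetrize hγ.2⟩

theorem sup_symmetric_eq_sup_general
    {I : Type*} [MeasurableSpace I]
    (μ : Measure I)
    (m : ℕ)
    (S : (Fin m → I) → ℝ)
    (hS_symm : ∀ σ : Equiv.Perm (Fin m), ∀ x, S (x ∘ σ) = S x) :
    sSup {r : ℝ | ∃ γ ∈ GammaSym μ m, r = ∫ x, S x ∂γ}
      = sSup {r : ℝ | ∃ γ ∈ Gamma μ m, r = ∫ x, S x ∂γ} := by
  congr 1
  refine Set.Subset.antisymm ?_ ?_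
  · rintro r ⟨γ, hγ, rfl⟩
    exact ⟨γ, gammaSym_subset_gamma μ m hγ, rfl⟩
  · rintro r ⟨γ, hγ, rfl⟩
    exact ⟨symmetrize γ, symmetrize_mem_gammaSym hγ, (integral_symmetrize hS_symm γ).symm⟩

/-- **Lemma (symmetrization).**  For a symmetric cost `S`, the symmetric transport
problem has the same value as the unrestricted one. -/
theorem sup_symmetric_eq_sup
    {I : Type*} [TopologicalSpace I] [PolishSpace I] [MeasurableSpace I] [BorelSpace I]
    (μ : Measure I) [IsFiniteMeasure μ]
    (m : ℕ) (hm : 2 ≤ m)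
    (S : (Fin m → I) → ℝ)
    (hS_symm : ∀ σ : Equiv.Perm (Fin m), ∀ x, S (x ∘ σ) = S x)
    (hS_usc : UpperSemicontinuous S)
    (ahat : I → ℝ) (hahat_lsc : LowerSemicontinuous ahat) (hahat_int : Integrable ahat μ)
    (hS_bound : ∀ x : Fin m → I, S x ≤ ∑ k, ahat (x k)) :
    sSup {r : ℝ | ∃ γ ∈ GammaSym μ m, r = ∫ x, S x ∂γ}
      = sSup {r : ℝ | ∃ γ ∈ Gamma μ m, r = ∫ x, S x ∂γ} :=
  sup_symmetric_eq_sup_general μ m S hS_symm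
end
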